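/- arXiv:math/0006035 — 3 statements merged into one kernel-verified Lean document; each statement's English description precedes it below -/
import Mathlib

section
/- Let P ∈ ℂ[x, y] be a polynomial, p ∈ ℂ², and (vₙ) a sequence of pairwise non-proportional nonzero vectors in ℂ² such that for each n there is a holomorphic arc γₙ : ℂ → ℂ² with γₙ(0) = p, γₙ'(0) = vₙ, and P ∘ γₙ ≡ 0. Then P = 0. -/
open MvPolynomial Filter Topology

private noncomputable def tf (w : ℂ × ℂ) : Fin 2 → ℂ := fun i => if i = 0 then w.1 else w.2

private lemma tf_pair (x : Fin 2 → ℂ) : tf (x 0, x 1) = x := by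
  funext i; fin_cases i <;> simp [tf]

private lemma tf_smul (c : ℂ) (w : ℂ × ℂ) : tf (c • w) = c • tf w := by
  funext i; fin_cases i <;> simp [tf]

private lemma tf_eval_pair (a b : ℂ) : tf (a, b) = fun i : Fin 2 => if i = 0 then a else b := rfl

private lemma continuous_tf : Continuous tf := by
  apply continuous_pi
  intro i
  fin_cases i <;> simp [tf] <;> fun_prop

private lemma eval_smul_homog {φ : MvPolynomial (Fin 2) ℂ} {n : ℕ} (hφ : φ.IsHomogeneous n)
    (c : ℂ) (x : Fin 2 → ℂ) : eval (c • x) φ = c ^ n * eval x φ := by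
  rw [eval_eq', eval_eq', Finset.mul_sum]
  apply Finset.sum_congr rfl
  intro d hd
  rw [mem_support_iff] at hd
  have hdeg : ∑ i, d i = n := by
    have := hφ hd
    rw [← this, Finsupp.weight_apply, Finsupp.sum]
    rw [Finset.sum_subset (Finset.subset_univ d.support)]
    · simp
    · intro i _ hi
      simp [Finsupp.notMem_support_iff.mp hi]
  have : ∏ i, (c • x) i ^ d i = c ^ n * ∏ i, x i ^ d i := by
    simp only [Pi.smul_apply, smul_eq_mul, mul_pow]
    rw [Finset.prod_mul_distrib, Finset.prod_pow_eq_pow_sum, hdeg]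
  rw [this]; ring

private lemma aeval_eq_eval (x : Fin 2 → ℂ) (q : MvPolynomial (Fin 2) ℂ) :
    aeval x q = eval x q := by
  simp [aeval_def]


private lemma key_tangent (Q : MvPolynomial (Fin 2) ℂ) {m : ℕ}
    (hmin : ∀ k < m, homogeneousComponent k Q = 0)
    (γ : ℂ → ℂ × ℂ) (hγd : Differentiable ℂ γ) (hγ0 : γ 0 = 0) (w : ℂ × ℂ)
    (hγ' : deriv γ 0 = w) (hz : ∀ t, eval (tf (γ t)) Q = 0) :
    eval (tf w) (homogeneousComponent m Q) = 0 := by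
  set D := Q.totalDegree with hD
  by_cases hmD : D < m
  · rw [homogeneousComponent_eq_zero _ _ hmD, map_zero]
  push_neg at hmD
  set u : ℂ → ℂ × ℂ := fun s => s⁻¹ • γ s with hu_def
  have hu : Tendsto u (𝓝[≠] (0:ℂ)) (𝓝 w) := by
    have hd : HasDerivAt γ w 0 := by
      have := (hγd 0).hasDerivAt
      rwa [hγ'] at this
    have := hasDerivAt_iff_tendsto_slope.mp hd
    refine this.congr (fun s => ?_)
    simp [slope_def_module, hγ0, u]
  set g : ℕ → ℂ → ℂ := fun k s => eval (tf (u s)) (homogeneousComponent k Q) with hg_def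
  set c : ℕ → ℂ := fun k => eval (tf w) (homogeneousComponent k Q) with hc_def
  set F : ℂ → ℂ := fun s => ∑ k ∈ Finset.range (D+1), s ^ (k - m) * g k s with hF_def
  have hgzero : ∀ k < m, ∀ s, g k s = 0 := by
    intro k hk s
    simp [hg_def, hmin k hk]
  have h1 : ∀ s : ℂ, s ≠ 0 → ∑ k ∈ Finset.range (D+1), s ^ k * g k s = 0 := by
    intro s hs
    have hγs : γ s = s • u s := by
      simp [hu_def, smul_smul, mul_inv_cancel₀ hs]
    have : ∀ k, s ^ k * g k s = eval (tf (γ s)) (homogeneousComponent k Q) := by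
      intro k
      rw [hγs, tf_smul, eval_smul_homog (homogeneousComponent_isHomogeneous k Q)]
    simp_rw [this]
    rw [← map_sum (eval (tf (γ s))), sum_homogeneousComponent]
    exact hz s
  have h2 : ∀ s : ℂ, s ≠ 0 → F s = 0 := by
    intro s hs
    have hsm : (s : ℂ) ^ m ≠ 0 := pow_ne_zero _ hs
    have : s ^ m * F s = 0 := by
      rw [hF_def, Finset.mul_sum, ← h1 s hs]
      apply Finset.sum_congr rfl
      intro k hk
      by_cases hkm : k < m
      · rw [hgzero k hkm s]; ring
      · push_neg at hkm
        rw [← mul_assoc, ← pow_add, Nat.add_sub_cancel' hkm]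
    exact (mul_eq_zero.mp this).resolve_left hsm
  have hFlim : Tendsto F (𝓝[≠] (0:ℂ)) (𝓝 (c m)) := by
    have hsum : (∑ k ∈ Finset.range (D+1), if k = m then c m else 0) = c m := by
      rw [Finset.sum_ite_eq' (Finset.range (D+1)) m]
      simp [Nat.lt_succ_of_le hmD]
    rw [hF_def, ← hsum]
    apply tendsto_finset_sum
    intro k _
    have hgk : Tendsto (g k) (𝓝[≠] (0:ℂ)) (𝓝 (c k)) := by
      have hcont : Continuous fun z : ℂ × ℂ => eval (tf z) (homogeneousComponent k Q) :=
        by apply Continuous.comp (MvPolynomial.continuous_eval (homogeneousComponent k Q)) continuous_tf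
      exact (hcont.tendsto w).comp hu
    rcases lt_trichotomy k m with hkm | hkm | hkm
    · have : ∀ s : ℂ, s ^ (k - m) * g k s = 0 := by
        intro s; rw [hgzero k hkm s, mul_zero]
      simp only [this]
      simpa [hkm.ne] using tendsto_const_nhds (α := ℂ) (f := 𝓝[≠] (0:ℂ)) (a := (0:ℂ))
    · subst hkm
      simp only [Nat.sub_self, pow_zero, one_mul, if_pos rfl]
      exact hgk
    · have hpow : Tendsto (fun s : ℂ => s ^ (k - m)) (𝓝[≠] (0:ℂ)) (𝓝 0) := by
        have : Tendsto (fun s : ℂ => s ^ (k - m)) (𝓝 (0:ℂ)) (𝓝 ((0:ℂ) ^ (k - m))) :=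
          (continuous_pow (k - m)).tendsto 0
        rw [zero_pow (Nat.sub_ne_zero_of_lt hkm)] at this
        exact this.mono_left nhdsWithin_le_nhds
      have := hpow.mul hgk
      rw [zero_mul] at this
      simpa [hkm.ne'] using this
  have hF0 : Tendsto F (𝓝[≠] (0:ℂ)) (𝓝 0) := by
    have heq : (fun _ : ℂ => (0:ℂ)) =ᶠ[𝓝[≠] (0:ℂ)] F := by
      filter_upwards [self_mem_nhdsWithin] with s hs
      exact (h2 s hs).symm
    exact Tendsto.congr' heq tendsto_const_nhds
  exact (tendsto_nhds_unique hFlim hF0)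

/-- A nonzero homogeneous polynomial in two variables vanishing on infinitely many
pairwise non-proportional directions is zero. -/
private lemma homog_vanish (H : MvPolynomial (Fin 2) ℂ) {m : ℕ} (hHhom : H.IsHomogeneous m)
    (v : ℕ → ℂ × ℂ) (hv0 : ∀ n, v n ≠ 0)
    (hvprop : ∀ a b : ℕ, a ≠ b → ∀ c : ℂ, v b ≠ c • v a)
    (hvan : ∀ n, eval (tf (v n)) H = 0) : H = 0 := by
  -- the set of indices with nonzero second coordinate is infinite
  have hsub : Set.Subsingleton {n : ℕ | (v n).2 = 0} := by
    intro a ha b hb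
    simp only [Set.mem_setOf_eq] at ha hb
    by_contra hab
    have ha1 : (v a).1 ≠ 0 := by
      intro h
      exact hv0 a (Prod.ext h ha)
    apply hvprop a b hab ((v b).1 / (v a).1)
    apply Prod.ext
    · simp [div_mul_cancel₀ _ ha1]
    · simp [ha, hb]
  have hSinf : Set.Infinite {n : ℕ | (v n).2 ≠ 0} := by
    have hfin : Set.Finite {n : ℕ | (v n).2 = 0} := hsub.finite
    have heq : {n : ℕ | (v n).2 ≠ 0} = {n : ℕ | (v n).2 = 0}ᶜ := by ext n; simp
    rw [heq]
    exact hfin.infinite_compl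
  -- ratios are injective on that set
  set r : ℕ → ℂ := fun n => (v n).1 / (v n).2 with hr
  have hinj : Set.InjOn r {n : ℕ | (v n).2 ≠ 0} := by
    intro a ha b hb hab
    simp only [Set.mem_setOf_eq] at ha hb
    by_contra hne
    apply hvprop a b hne ((v b).2 / (v a).2)
    simp only [hr] at hab
    rw [div_eq_div_iff ha hb] at hab
    apply Prod.ext
    · show (v b).1 = (v b).2 / (v a).2 * (v a).1
      field_simp
      linear_combination -hab
    · show (v b).2 = (v b).2 / (v a).2 * (v a).2
      field_simp
  have hZinf : Set.Infinite (r '' {n : ℕ | (v n).2 ≠ 0}) := hSinf.image hinj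
  -- the one-variable polynomial H(z, 1)
  set h1 : Polynomial ℂ := aeval (fun i : Fin 2 => if i = 0 then Polynomial.X else 1) H with hh1
  have h1eval : ∀ z : ℂ, h1.eval z = eval (tf (z, 1)) H := by
    intro z
    rw [hh1, ← Polynomial.coe_aeval_eq_eval, comp_aeval_apply (f := fun i : Fin 2 => if i = 0 then Polynomial.X else (1 : Polynomial ℂ)) (Polynomial.aeval z)]
    simp [aeval_def, tf, apply_ite (Polynomial.aeval z)]
    rfl
  have hzero : ∀ z ∈ r '' {n : ℕ | (v n).2 ≠ 0}, h1.eval z = 0 := by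
    rintro z ⟨n, hn, rfl⟩
    have hvn2 : (v n).2 ≠ 0 := hn
    have hrepr : (r n, (1:ℂ)) = ((v n).2)⁻¹ • v n := by
      apply Prod.ext
      · simp [hr, div_eq_inv_mul]
      · simp [inv_mul_cancel₀ hvn2]
    rw [h1eval, hrepr, tf_smul, eval_smul_homog hHhom, hvan n, mul_zero]
  have h10 : h1 = 0 := by
    apply Polynomial.eq_zero_of_infinite_isRoot
    apply hZinf.mono
    intro z hz
    exact hzero z hz
  -- conclude H = 0 pointwise
  have hpt : ∀ x : Fin 2 → ℂ, eval x H = 0 := by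
    intro x
    rw [← tf_pair x]
    set a := x 0; set b := x 1
    set gx : Polynomial ℂ := aeval (fun i : Fin 2 => if i = 0 then Polynomial.C a else Polynomial.X) H with hgx
    have gxeval : ∀ y : ℂ, gx.eval y = eval (tf (a, y)) H := by
      intro y
      rw [hgx, ← Polynomial.coe_aeval_eq_eval, comp_aeval_apply (f := fun i : Fin 2 => if i = 0 then Polynomial.C a else Polynomial.X) (Polynomial.aeval y)]
      simp [aeval_def, tf, apply_ite (Polynomial.aeval y)]
      rfl
    have gx0 : gx = 0 := by
      apply Polynomial.eq_zero_of_infinite_isRoot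
      apply Set.Infinite.mono _ ((Set.finite_singleton (0:ℂ)).infinite_compl)
      intro y hy
      have hy0 : y ≠ 0 := hy
      have hrepr : (a, y) = y • (a / y, (1:ℂ)) := by
        apply Prod.ext
        · simp [mul_div_cancel₀ _ hy0]
        · simp
      show gx.IsRoot y
      rw [Polynomial.IsRoot, gxeval, hrepr, tf_smul, eval_smul_homog hHhom, ← h1eval, h10]
      simp
    rw [← gxeval b, gx0]
    simp
  have : ∀ x : Fin 2 → ℂ, eval x H = eval x 0 := by simpa using hpt
  exact MvPolynomial.funext this

/-- An entire curve through a single point of `ℂ²` with infinitely many pairwise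
non-proportional tangent directions cannot lie in the zero set of a nonzero polynomial:
if `P` vanishes on holomorphic arcs through `p` with pairwise non-proportional nonzero
tangent vectors `vₙ`, then `P = 0`. -/
theorem polynomial_zero_of_infinitely_many_tangent_directions
    (P : MvPolynomial (Fin 2) ℂ) (p : ℂ × ℂ) (v : ℕ → ℂ × ℂ)
    (hv0 : ∀ n, v n ≠ 0)
    (hvprop : ∀ m n : ℕ, m ≠ n → ∀ c : ℂ, v n ≠ c • v m)
    (harc : ∀ n : ℕ, ∃ γ : ℂ → ℂ × ℂ, Differentiable ℂ γ ∧ γ 0 = p ∧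
      deriv γ 0 = v n ∧
      ∀ t : ℂ, MvPolynomial.eval (fun i : Fin 2 => if i = 0 then (γ t).1 else (γ t).2) P = 0) :
    P = 0 := by
  by_contra hP
  set tp : Fin 2 → ℂ := tf p with htp
  set Q : MvPolynomial (Fin 2) ℂ := aeval (fun i => X i + C (tp i)) P with hQdef
  have hQeval : ∀ x : Fin 2 → ℂ, eval x Q = eval (x + tp) P := by
    intro x
    rw [hQdef, aeval_def, eval_eval₂]
    have h1 : (eval x).comp (algebraMap ℂ (MvPolynomial (Fin 2) ℂ)) = RingHom.id ℂ := by
      ext r; simp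
    have h2 : (fun i : Fin 2 => eval x (X i + C (tp i))) = x + tp := by
      funext i; simp
    rw [h1, h2, eval₂_id]
  have hQ0 : Q ≠ 0 := by
    intro h
    apply hP
    apply MvPolynomial.funext
    intro x
    have := hQeval (x - tp)
    rw [h, map_zero, sub_add_cancel] at this
    simp [← this]
  have hex : ∃ k, homogeneousComponent k Q ≠ 0 := by
    by_contra h
    push_neg at h
    apply hQ0
    rw [← sum_homogeneousComponent Q]
    exact Finset.sum_eq_zero fun k _ => h k
  set m := Nat.find hex with hm
  have hH : homogeneousComponent m Q ≠ 0 := Nat.find_spec hex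
  have hmin : ∀ k < m, homogeneousComponent k Q = 0 := by
    intro k hk
    by_contra h
    exact Nat.find_min hex hk h
  apply hH
  apply homog_vanish _ (homogeneousComponent_isHomogeneous m Q) v hv0 hvprop
  intro n
  obtain ⟨γ, hγd, hγ0, hγ', hγz⟩ := harc n
  apply key_tangent Q hmin (fun t => γ t - p) (hγd.sub_const p) (by simp [hγ0]) (v n)
  · rw [← hγ']
    exact deriv_sub_const p
  · intro t
    have htf : tf (γ t - p) + tp = tf (γ t) := by
      funext i; fin_cases i <;> simp [tf, htp]
    rw [hQeval, htf]
    exact hγz t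
end

section
/- Let P = ℂ × ℙ¹ with projection p to the first factor, and let D = {(z, w) : w² = h(z)} ⊂ ℂ × ℂ ⊂ ℂ × ℙ¹ for an entire function h that is not identically zero. Then there exists a holomorphic map F : ℂ × ℂ → (ℂ × ℙ¹) \ D of the form F(z, w) = (z, H(z, w)) such that for every z with h(z) ≠ 0, the map w ↦ H(z, w) is a surjection from ℂ onto ℙ¹ \ {√h(z), −√h(z)}, and for every z with h(z) = 0, the map w ↦ H(z, w) is a Möbius transformation of ℙ¹ restricted to ℂ, with image ℙ¹ \ {0}. -/
/-!
The fibre map is `H z w = s · coth (s w)` with `s² = h z`. Writing it as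
`cosh (s w) / (w · sinh (s w) / (s w))`, numerator and denominator are even in `s`, hence entire
functions of `h z · w²`: they are `coshSqrt u = cosh √u` and `sinhcSqrt u = sinh √u / √u`,
defined by power series. The identity `cosh² - sinh² = 1` shows that numerator and denominator
never vanish together and that `H` never takes a value `v` with `v² = h z`. Conversely
`s coth t = v` is solved by `exp (2t) = (v + s) / (v - s)` whenever `v ≠ ±s`, and at `h z = 0`
the map degenerates to `w ↦ 1 / w`.
-/

open Complex OnePoint

open scoped Nat

namespace FormalMultilinearSeries

variable {𝕜 E : Type*} [NontriviallyNormedField 𝕜] [NormedRing E] [NormedAlgebra 𝕜 E]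
  [NormOneClass E]

theorem ofScalars_radius_eq_top_of_norm_le_inv_factorial {c : ℕ → 𝕜}
    (hc : ∀ n, ‖c n‖ ≤ (n ! : ℝ)⁻¹) : (ofScalars E c).radius = ⊤ := by
  refine radius_eq_top_of_summable_norm _ fun r ↦ ?_
  refine (Real.summable_pow_div_factorial r).of_nonneg_of_le (fun n ↦ by positivity) fun n ↦ ?_
  rw [ofScalars_norm, div_eq_inv_mul]
  gcongr
  exact hc n

theorem analyticAt_ofScalarsSum_of_norm_le_inv_factorial [CompleteSpace E] {c : ℕ → 𝕜}
    (hc : ∀ n, ‖c n‖ ≤ (n ! : ℝ)⁻¹) (x : E) : AnalyticAt 𝕜 (ofScalarsSum c) x := by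
  have hr := ofScalars_radius_eq_top_of_norm_le_inv_factorial (E := E) hc
  refine ((ofScalars E c).hasFPowerSeriesOnBall (hr ▸ ENNReal.zero_lt_top)).analyticAt_of_mem ?_
  simp [hr]

end FormalMultilinearSeries

namespace Complex

noncomputable def coshSqrt : ℂ → ℂ :=
  FormalMultilinearSeries.ofScalarsSum fun n ↦ ((2 * n)! : ℂ)⁻¹

noncomputable def sinhcSqrt : ℂ → ℂ :=
  FormalMultilinearSeries.ofScalarsSum fun n ↦ ((2 * n + 1)! : ℂ)⁻¹

theorem norm_factorial_inv_le {m n : ℕ} (h : n ≤ m) : ‖(m ! : ℂ)⁻¹‖ ≤ (n ! : ℝ)⁻¹ := by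
  rw [norm_inv, norm_natCast]
  gcongr

theorem analyticAt_coshSqrt (u : ℂ) : AnalyticAt ℂ coshSqrt u :=
  FormalMultilinearSeries.analyticAt_ofScalarsSum_of_norm_le_inv_factorial
    (fun _ ↦ norm_factorial_inv_le (by omega)) u

theorem analyticAt_sinhcSqrt (u : ℂ) : AnalyticAt ℂ sinhcSqrt u :=
  FormalMultilinearSeries.analyticAt_ofScalarsSum_of_norm_le_inv_factorial
    (fun _ ↦ norm_factorial_inv_le (by omega)) u

@[simp] theorem coshSqrt_zero : coshSqrt 0 = 1 := by simp [coshSqrt]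

@[simp] theorem sinhcSqrt_zero : sinhcSqrt 0 = 1 := by simp [sinhcSqrt]

theorem coshSqrt_sq (x : ℂ) : coshSqrt (x ^ 2) = cosh x := by
  rw [coshSqrt, FormalMultilinearSeries.ofScalars_sum_eq, cosh_eq_tsum]
  refine tsum_congr fun n ↦ ?_
  rw [smul_eq_mul, ← pow_mul, inv_mul_eq_div]

theorem mul_sinhcSqrt_sq (x : ℂ) : x * sinhcSqrt (x ^ 2) = sinh x := by
  rw [sinhcSqrt, FormalMultilinearSeries.ofScalars_sum_eq, ← tsum_mul_left, sinh_eq_tsum]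
  refine tsum_congr fun n ↦ ?_
  rw [smul_eq_mul, ← pow_mul, pow_succ']
  ring

theorem coshSqrt_sq_sub_mul_sinhcSqrt_sq (u : ℂ) : coshSqrt u ^ 2 - u * sinhcSqrt u ^ 2 = 1 := by
  obtain ⟨x, rfl⟩ := IsAlgClosed.exists_pow_nat_eq u two_pos
  rw [coshSqrt_sq, ← cosh_sq_sub_sinh_sq x, ← mul_sinhcSqrt_sq]
  ring

end Complex

namespace OnePoint

variable {K : Type*} [DivisionRing K]

open Classical in
noncomputable def ratio (f g : K) : OnePoint K := if g = 0 then ∞ else ↑(f / g)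

@[simp] theorem ratio_zero_right (f : K) : ratio f 0 = ∞ := by simp [ratio]

theorem ratio_eq_coe_iff {f g v : K} : ratio f g = ↑v ↔ g ≠ 0 ∧ f = v * g := by
  unfold ratio
  split_ifs with hg
  · simp [hg]
  · simp [hg, div_eq_iff hg]

theorem range_ratio_one : Set.range (ratio (1 : K)) = {x | x ≠ ↑(0 : K)} := by
  ext x
  induction x using OnePoint.rec with
  | infty => simpa using ⟨0, ratio_zero_right 1⟩
  | coe v =>
    simp only [Set.mem_range, ratio_eq_coe_iff, Set.mem_ofPred_eq, ne_eq, coe_eq_coe]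
    constructor
    · rintro ⟨w, hw, hvw⟩ rfl
      simp at hvw
    · intro hv
      exact ⟨v⁻¹, inv_ne_zero hv, (mul_inv_cancel₀ hv).symm⟩

end OnePoint

namespace Complex

theorem exists_mul_cosh_eq_mul_sinh {s v : ℂ} (hs : s ≠ 0) (hv : v ^ 2 ≠ s ^ 2) :
    ∃ t, sinh t ≠ 0 ∧ s * cosh t = v * sinh t := by
  have hvs : v - s ≠ 0 := fun h ↦ hv (by linear_combination (v + s) * h)
  have hvs' : v + s ≠ 0 := fun h ↦ hv (by linear_combination (v - s) * h)
  -- `s cosh t = v sinh t` amounts to `exp (2 t) = (v + s) / (v - s)`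
  set t := log ((v + s) / (v - s)) / 2
  have hexp : (v - s) * (exp t * exp t) = v + s := by
    rw [← exp_add, add_halves, exp_log (div_ne_zero hvs' hvs), mul_div_cancel₀ _ hvs]
  have hinv : exp t * exp (-t) = 1 := by rw [← exp_add, add_neg_cancel, exp_zero]
  rw [← cosh_add_sinh] at hexp hinv
  rw [← cosh_sub_sinh] at hinv
  refine ⟨t, fun h ↦ hs ?_, ?_⟩
  · rw [h] at hexp hinv
    linear_combination (-1 / 2 : ℂ) * (hexp - (v - s) * hinv)
  · linear_combination (-1 / 2 : ℂ) *
      ((cosh t - sinh t) * hexp - (v - s) * (cosh t + sinh t) * hinv)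

noncomputable def sqrtCoth (a w : ℂ) : OnePoint ℂ :=
  OnePoint.ratio (coshSqrt (a * w ^ 2)) (w * sinhcSqrt (a * w ^ 2))

theorem coshSqrt_sq_sub_mul_sq_mul_sinhcSqrt (a w : ℂ) :
    coshSqrt (a * w ^ 2) ^ 2 - a * (w * sinhcSqrt (a * w ^ 2)) ^ 2 = 1 := by
  linear_combination coshSqrt_sq_sub_mul_sinhcSqrt_sq (a * w ^ 2)

theorem sq_ne_of_sqrtCoth_eq_coe {a w v : ℂ} (h : sqrtCoth a w = ↑v) : v ^ 2 ≠ a := by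
  rintro rfl
  obtain ⟨-, hv⟩ := OnePoint.ratio_eq_coe_iff.mp h
  have := coshSqrt_sq_sub_mul_sq_mul_sinhcSqrt (v ^ 2) w
  rw [hv] at this
  exact zero_ne_one (by linear_combination this)

theorem sqrtCoth_zero_left : sqrtCoth 0 = OnePoint.ratio 1 := by
  ext1 w
  simp [sqrtCoth]

theorem exists_sqrtCoth_eq_coe {a v : ℂ} (ha : a ≠ 0) (hv : v ^ 2 ≠ a) :
    ∃ w, sqrtCoth a w = ↑v := by
  obtain ⟨s, rfl⟩ := IsAlgClosed.exists_pow_nat_eq a two_pos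
  have hs : s ≠ 0 := by rintro rfl; simp at ha
  obtain ⟨t, ht, hst⟩ := exists_mul_cosh_eq_mul_sinh hs hv
  have hw : s ^ 2 * (t / s) ^ 2 = t ^ 2 := by field_simp
  have hsinh : t / s * sinhcSqrt (t ^ 2) = sinh t / s := by
    rw [← mul_sinhcSqrt_sq]
    ring
  refine ⟨t / s, OnePoint.ratio_eq_coe_iff.mpr ?_⟩
  rw [hw, hsinh, coshSqrt_sq]
  exact ⟨div_ne_zero ht hs, by field_simp; linear_combination hst⟩

theorem range_sqrtCoth {a : ℂ} (ha : a ≠ 0) :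
    Set.range (sqrtCoth a) = {x | ∀ v : ℂ, x = ↑v → v ^ 2 ≠ a} := by
  ext x
  induction x using OnePoint.rec with
  | infty => simpa using ⟨0, by simp [sqrtCoth]⟩
  | coe v =>
    simp only [Set.mem_range, Set.mem_ofPred_eq, OnePoint.coe_eq_coe, forall_eq']
    exact ⟨fun ⟨_, hw⟩ ↦ sq_ne_of_sqrtCoth_eq_coe hw, exists_sqrtCoth_eq_coe ha⟩

end Complex

theorem dominate_complement_of_double_section_normal_form_general
    (h : ℂ → ℂ) (hh : Differentiable ℂ h) :
    ∃ H : ℂ → ℂ → OnePoint ℂ,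
      -- `H` is holomorphic as a map to `ℙ¹`: locally `H = f/g` with `f, g` analytic,
      -- having no common zero, and `g = 0` exactly at the poles of `H`
      (∀ p : ℂ × ℂ, ∃ f g : ℂ × ℂ → ℂ,
        AnalyticAt ℂ f p ∧ AnalyticAt ℂ g p ∧ ¬(f p = 0 ∧ g p = 0) ∧
        ∀ᶠ q in nhds p,
          (g q = 0 → H q.1 q.2 = ∞) ∧ (g q ≠ 0 → H q.1 q.2 = ((f q / g q : ℂ) : OnePoint ℂ))) ∧
      -- the image avoids the double section `D = {(z,w) : w² = h z}`
      (∀ z w : ℂ, ∀ v : ℂ, H z w = (v : OnePoint ℂ) → v ^ 2 ≠ h z) ∧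
      -- over `z` with `h z ≠ 0`, the fiber map surjects onto `ℙ¹ \ {±√h z}`
      (∀ z : ℂ, h z ≠ 0 →
        Set.range (H z) = {x : OnePoint ℂ | ∀ v : ℂ, x = (v : OnePoint ℂ) → v ^ 2 ≠ h z}) ∧
      -- over `z` with `h z = 0`, the fiber map is a Möbius transformation with image `ℙ¹ \ {0}`
      (∀ z : ℂ, h z = 0 →
        (∃ a b c d : ℂ, a * d - b * c ≠ 0 ∧
          ∀ w : ℂ, H z w = if c * w + d = 0 then ∞
            else (((a * w + b) / (c * w + d) : ℂ) : OnePoint ℂ)) ∧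
        Set.range (H z) = {x : OnePoint ℂ | x ≠ ((0 : ℂ) : OnePoint ℂ)}) := by
  refine ⟨fun z ↦ sqrtCoth (h z), fun p ↦ ?_, fun z w v ↦ sq_ne_of_sqrtCoth_eq_coe,
    fun z ↦ range_sqrtCoth, fun z hz ↦ ?_⟩
  · have hu : AnalyticAt ℂ (fun q : ℂ × ℂ ↦ h q.1 * q.2 ^ 2) p :=
      ((hh.analyticAt _).comp analyticAt_fst).mul (analyticAt_snd.pow 2)
    refine ⟨fun q ↦ coshSqrt (h q.1 * q.2 ^ 2), fun q ↦ q.2 * sinhcSqrt (h q.1 * q.2 ^ 2),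
      (analyticAt_coshSqrt _).comp hu, analyticAt_snd.mul ((analyticAt_sinhcSqrt _).comp hu),
      fun ⟨hf0, hg0⟩ ↦ ?_,
      .of_forall fun q ↦ ⟨fun hq ↦ if_pos hq, fun hq ↦ if_neg hq⟩⟩
    simpa [hf0, hg0] using coshSqrt_sq_sub_mul_sq_mul_sinhcSqrt (h p.1) p.2
  · simp only [hz, sqrtCoth_zero_left]
    exact ⟨⟨0, 1, 1, 0, by norm_num, fun w ↦ by simp [OnePoint.ratio]⟩, OnePoint.range_ratio_one⟩

/-- Theorem 1.2 in normal form over `R = ℂ`: for an entire `h` not identically zero there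
is a fiber-preserving holomorphic map `F(z,w) = (z, H z w)` into `(ℂ × ℙ¹) \ D`, where
`D = {(z,w) : w² = h z}`, such that over each `z` with `h z ≠ 0` the fiber map surjects
onto `ℙ¹ \ {√h z, -√h z}`, and over each `z` with `h z = 0` the fiber map is a Möbius
transformation restricted to `ℂ`, with image `ℙ¹ \ {0}`.  Holomorphy of the `ℙ¹`-valued
map is expressed by local representations `f/g` with `f, g` analytic without common zero. -/
theorem dominate_complement_of_double_section_normal_form
    (h : ℂ → ℂ) (hh : Differentiable ℂ h) (hne : h ≠ 0) :
    ∃ H : ℂ → ℂ → OnePoint ℂ,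
      -- `H` is holomorphic as a map to `ℙ¹`: locally `H = f/g` with `f, g` analytic,
      -- having no common zero, and `g = 0` exactly at the poles of `H`
      (∀ p : ℂ × ℂ, ∃ f g : ℂ × ℂ → ℂ,
        AnalyticAt ℂ f p ∧ AnalyticAt ℂ g p ∧ ¬(f p = 0 ∧ g p = 0) ∧
        ∀ᶠ q in nhds p,
          (g q = 0 → H q.1 q.2 = ∞) ∧ (g q ≠ 0 → H q.1 q.2 = ((f q / g q : ℂ) : OnePoint ℂ))) ∧
      -- the image avoids the double section `D = {(z,w) : w² = h z}`
      (∀ z w : ℂ, ∀ v : ℂ, H z w = (v : OnePoint ℂ) → v ^ 2 ≠ h z) ∧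
      -- over `z` with `h z ≠ 0`, the fiber map surjects onto `ℙ¹ \ {±√h z}`
      (∀ z : ℂ, h z ≠ 0 →
        Set.range (H z) = {x : OnePoint ℂ | ∀ v : ℂ, x = (v : OnePoint ℂ) → v ^ 2 ≠ h z}) ∧
      -- over `z` with `h z = 0`, the fiber map is a Möbius transformation with image `ℙ¹ \ {0}`
      (∀ z : ℂ, h z = 0 →
        (∃ a b c d : ℂ, a * d - b * c ≠ 0 ∧
          ∀ w : ℂ, H z w = if c * w + d = 0 then ∞
            else (((a * w + b) / (c * w + d) : ℂ) : OnePoint ℂ)) ∧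
        Set.range (H z) = {x : OnePoint ℂ | x ≠ ((0 : ℂ) : OnePoint ℂ)}) :=
  dominate_complement_of_double_section_normal_form_general h hh
end

section
/- Let u₀, u₁ be holomorphic near 0 with u₀(0) ≠ 0, u₁(0) ≠ 0, set a = u₀(0)/u₁(0), v₀(z) = z^m u₀(z), v₁(z) = u₁(z), and √h(z) = (v₀(z) − v₁(z))/2. Suppose g₊(z) = 1 + z^m + O(|z|^{m+1}) and g₋(z) = a·z^m + O(|z|^{m+1}). Then μ(z) = √h(z)·(g₊(z) + g₋(z))/(g₊(z) − g₋(z)) satisfies μ(z) = −(u₀(z)·z^m + u₁(z))/2 + O(|z|^{m+1}) as z → 0. -/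
/-!
Away from the zeros of `g₊ - g₋`,
`μ + (u₀ z^m + u₁)/2 = (z^m u₀ g₊ - u₁ g₋)/(g₊ - g₋)`. The denominator tends to `1`, and
substituting the jets of `g₊` and `g₋` turns the numerator into
`z^m (u₀ - a u₁) + z^{2m} u₀ + O(z^{m+1})`, which is `O(z^{m+1})` because `u₀ - a u₁` vanishes
at `0` and `m ≥ 1`.
-/

open Filter Asymptotics Topology

theorem Asymptotics.IsBigO.tendsto_of_sub {α E F : Type*} [NormedAddCommGroup E]
    [NormedAddCommGroup F] {l : Filter α} {f g : α → E} {h : α → F} {c : E}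
    (hfg : (fun x => f x - g x) =O[l] h) (h0 : Tendsto h l (𝓝 0)) (hg : Tendsto g l (𝓝 c)) :
    Tendsto f l (𝓝 c) := by
  simpa using (hfg.trans_tendsto h0).add hg

section

variable {𝕜 : Type*} [NontriviallyNormedField 𝕜] {l : Filter 𝕜} {gp gm : 𝕜 → 𝕜} {m : ℕ}
  {a : 𝕜}

theorem isBigO_pow_pow_of_le {n k : ℕ} (h : n ≤ k) :
    (fun z : 𝕜 => z ^ k) =O[𝓝 0] fun z => z ^ n := by
  rcases h.eq_or_lt with rfl | h
  · exact isBigO_refl _ _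
  · exact (isLittleO_pow_pow h).isBigO

theorem tendsto_sub_of_isBigO_jets (hl : l ≤ 𝓝 0) (hm : m ≠ 0)
    (hgp : (fun z => gp z - (1 + z ^ m)) =O[l] fun z => z ^ (m + 1))
    (hgm : (fun z => gm z - a * z ^ m) =O[l] fun z => z ^ (m + 1)) :
    Tendsto (fun z => gp z - gm z) l (𝓝 1) := by
  have hpow : ∀ n, n ≠ 0 → Tendsto (fun z : 𝕜 => z ^ n) l (𝓝 0) := fun n hn => by
    simpa [zero_pow hn] using (tendsto_id.mono_left hl).pow n
  have hgp1 : Tendsto gp l (𝓝 1) :=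
    hgp.tendsto_of_sub (hpow _ m.succ_ne_zero) (by simpa using (hpow m hm).const_add 1)
  have hgm0 : Tendsto gm l (𝓝 0) :=
    hgm.tendsto_of_sub (hpow _ m.succ_ne_zero) (by simpa using (hpow m hm).const_mul a)
  simpa using hgp1.sub hgm0

theorem isBigO_pow_mul_sub_mul_of_isBigO_jets (hl : l ≤ 𝓝 0) (hm : m ≠ 0) {u₀ u₁ : 𝕜 → 𝕜}
    (hu₀ : DifferentiableAt 𝕜 u₀ 0) (hu₁ : DifferentiableAt 𝕜 u₁ 0) (ha : u₀ 0 = a * u₁ 0)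
    (hgp : (fun z => gp z - (1 + z ^ m)) =O[l] fun z => z ^ (m + 1))
    (hgm : (fun z => gm z - a * z ^ m) =O[l] fun z => z ^ (m + 1)) :
    (fun z => z ^ m * u₀ z * gp z - u₁ z * gm z) =O[l] fun z => z ^ (m + 1) := by
  have hu₀1 : u₀ =O[l] fun _ => (1 : 𝕜) := (hu₀.continuousAt.tendsto.mono_left hl).isBigO_one 𝕜
  have hu₁1 : u₁ =O[l] fun _ => (1 : 𝕜) := (hu₁.continuousAt.tendsto.mono_left hl).isBigO_one 𝕜
  have hpow1 : (fun z : 𝕜 => z ^ m) =O[l] fun _ => (1 : 𝕜) :=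
    (((continuous_pow m).tendsto 0).mono_left hl).isBigO_one 𝕜
  have hvanish : (fun z => u₀ z - a * u₁ z) =O[l] fun z => z := by
    simpa [ha] using ((hu₀.sub (hu₁.const_mul a)).isBigO_sub).mono hl
  have hcross : (fun z : 𝕜 => z ^ m * (u₀ z - a * u₁ z)) =O[l] fun z => z ^ (m + 1) := by
    simpa [pow_succ] using (isBigO_refl (fun z : 𝕜 => z ^ m) l).mul hvanish
  have hsquare : (fun z : 𝕜 => z ^ (2 * m) * u₀ z) =O[l] fun z => z ^ (m + 1) := by
    simpa using ((isBigO_pow_pow_of_le (by omega)).mono hl).mul hu₀1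
  have hp : (fun z => z ^ m * u₀ z * (gp z - (1 + z ^ m))) =O[l] fun z => z ^ (m + 1) := by
    simpa using (hpow1.mul hu₀1).mul hgp
  have hq : (fun z => u₁ z * (gm z - a * z ^ m)) =O[l] fun z => z ^ (m + 1) := by
    simpa using hu₁1.mul hgm
  exact (((hp.sub hq).add hcross).add hsquare).congr_left fun z => by ring

end

theorem mu_sub_eq_div {K : Type*} [Field K] (h2 : (2 : K) ≠ 0) (s u₀ u₁ p q : K)
    (h : p - q ≠ 0) :
    (s * u₀ - u₁) / 2 * (p + q) / (p - q) - (-(u₀ * s + u₁) / 2) =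
      (s * u₀ * p - u₁ * q) / (p - q) := by
  field_simp
  ring

theorem mu_asymptotics_at_infinity_point_general
    (u₀ u₁ gp gm : ℂ → ℂ) (m : ℕ) (hm : 1 ≤ m)
    (hu₀ : AnalyticAt ℂ u₀ 0) (hu₁ : AnalyticAt ℂ u₁ 0)
    (hu₁0 : u₁ 0 ≠ 0)
    (hgp : (fun z => gp z - (1 + z ^ m)) =O[nhdsWithin (0 : ℂ) {(0 : ℂ)}ᶜ]
      fun z => z ^ (m + 1))
    (hgm : (fun z => gm z - (u₀ 0 / u₁ 0) * z ^ m) =O[nhdsWithin (0 : ℂ) {(0 : ℂ)}ᶜ]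
      fun z => z ^ (m + 1)) :
    (fun z => (z ^ m * u₀ z - u₁ z) / 2 * (gp z + gm z) / (gp z - gm z) -
        (-(u₀ z * z ^ m + u₁ z) / 2))
      =O[nhdsWithin (0 : ℂ) {(0 : ℂ)}ᶜ] fun z => z ^ (m + 1) := by
  have hl : 𝓝[≠] (0 : ℂ) ≤ 𝓝 0 := nhdsWithin_le_nhds
  have hm0 : m ≠ 0 := Nat.one_le_iff_ne_zero.mp hm
  have hden := tendsto_sub_of_isBigO_jets hl hm0 hgp hgm
  have hnum := isBigO_pow_mul_sub_mul_of_isBigO_jets hl hm0 hu₀.differentiableAt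
    hu₁.differentiableAt (div_mul_cancel₀ _ hu₁0).symm hgp hgm
  have hquot := hnum.mul ((hden.inv₀ one_ne_zero).isBigO_one ℂ)
  refine EventuallyEq.trans_isBigO ?_ (by simpa using hquot)
  filter_upwards [hden.eventually_ne one_ne_zero] with z hz
  rw [mu_sub_eq_div two_ne_zero _ _ _ _ _ hz, div_eq_mul_inv]

/-- Asymptotics of `μ` at a point of `E_∞`: with `v₀ z = z^m u₀ z`, `v₁ z = u₁ z`,
`√h z = (v₀ z - v₁ z)/2`, `a = u₀ 0 / u₁ 0`, and jets
`g₊ z = 1 + z^m + O(z^{m+1})`, `g₋ z = a z^m + O(z^{m+1})`, the function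
`μ z = √h z (g₊ z + g₋ z)/(g₊ z - g₋ z)` satisfies
`μ z = -(u₀ z z^m + u₁ z)/2 + O(z^{m+1})` as `z → 0`. -/
theorem mu_asymptotics_at_infinity_point
    (u₀ u₁ gp gm : ℂ → ℂ) (m : ℕ) (hm : 1 ≤ m)
    (hu₀ : AnalyticAt ℂ u₀ 0) (hu₁ : AnalyticAt ℂ u₁ 0)
    (hu₀0 : u₀ 0 ≠ 0) (hu₁0 : u₁ 0 ≠ 0)
    (hgp : (fun z => gp z - (1 + z ^ m)) =O[nhdsWithin (0 : ℂ) {(0 : ℂ)}ᶜ]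
      fun z => z ^ (m + 1))
    (hgm : (fun z => gm z - (u₀ 0 / u₁ 0) * z ^ m) =O[nhdsWithin (0 : ℂ) {(0 : ℂ)}ᶜ]
      fun z => z ^ (m + 1)) :
    (fun z => (z ^ m * u₀ z - u₁ z) / 2 * (gp z + gm z) / (gp z - gm z) -
        (-(u₀ z * z ^ m + u₁ z) / 2))
      =O[nhdsWithin (0 : ℂ) {(0 : ℂ)}ᶜ] fun z => z ^ (m + 1) :=
  mu_asymptotics_at_infinity_point_general u₀ u₁ gp gm m hm hu₀ hu₁ hu₁0 hgp hgm
end
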